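/- Let T > 0, let a : [0,T] → [0,∞) and r : [0,T] → [0,q] be continuous, let x be the solution of x'(t) = -a(t) x(t - r(t)) with x(t) = φ(t) on [-q, 0] (φ ∈ C([-q,0],ℝ)), and let z_h be the solution of z_h'(t) = -a(t) z_h(γ_h(t,r)) with the same initial data at nodes. Then for all t ∈ [0,T]: |x(t) - z_h(t)| ≤ (e^{∫_0^T a(s) ds} ∫_0^T a(s) ds) · w_x(w_r(h;T) + 2h; T), where w_r(h;T) is the modulus of continuity of r at scale h on [0,T] and w_x(δ;T) = sup { |x(t₂)-x(t₁)| : -q ≤ t₁,t₂ ≤ T, |t₂-t₁| ≤ δ }. -/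

import Mathlib

/-!
The error `E = x - z` vanishes at `0`, and its right derivative is
`-a(t) (x(t - r t) - z(γ_h t))`. Since `|t - r t - γ_h t| ≤ w_r(h) + 2h`, this is bounded by
`a(t) (w_x + sup_{[0,t]} |E|)`, grid points `γ_h t < 0` contributing no error because
`x = z = φ` there. A delayed Gronwall argument then gives `|E t| ≤ w_x (e^{A t} - 1)` with
`A t = ∫_0^t a`: compare `|E|` with the fence `(w_x + δ) e^{A} - w_x` up to the first time it
is reached, and let `δ → 0`. Finally `e^A - 1 ≤ A e^A`.
-/

/-- The piecewise constant deviated argument -/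
noncomputable def gammaPCA (h : ℝ) (r : ℝ → ℝ) (t : ℝ) : ℝ :=
  (⌊t / h - (⌊r ((⌊t / h⌋ : ℝ) * h) / h⌋ : ℝ)⌋ : ℝ) * h

open Set

/-- `w_f(δ)` on `[a, b]` in the notation of the paper; for `f` continuous on `[a, b]` the set is
bounded, so the `sSup` is not the junk value. -/
noncomputable def modulusOfContinuityOn (f : ℝ → ℝ) (a b δ : ℝ) : ℝ :=
  sSup {e : ℝ | ∃ s₁ s₂ : ℝ, a ≤ s₁ ∧ s₁ ≤ b ∧ a ≤ s₂ ∧ s₂ ≤ b ∧ |s₂ - s₁| ≤ δ ∧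
    e = |f s₂ - f s₁|}

section Modulus

variable {f : ℝ → ℝ} {a b δ : ℝ}

theorem abs_sub_le_modulusOfContinuityOn (hf : ContinuousOn f (Icc a b)) {s₁ s₂ : ℝ}
    (h₁ : s₁ ∈ Icc a b) (h₂ : s₂ ∈ Icc a b) (hs : |s₂ - s₁| ≤ δ) :
    |f s₂ - f s₁| ≤ modulusOfContinuityOn f a b δ := by
  obtain ⟨C, hC⟩ := isCompact_Icc.exists_bound_of_continuousOn hf
  refine le_csSup ⟨C + C, ?_⟩ ⟨s₁, s₂, h₁.1, h₁.2, h₂.1, h₂.2, hs, rfl⟩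
  rintro e ⟨u₁, u₂, hu₁, hu₁', hu₂, hu₂', -, rfl⟩
  have := hC u₁ ⟨hu₁, hu₁'⟩
  have := hC u₂ ⟨hu₂, hu₂'⟩
  rw [Real.norm_eq_abs] at *
  linarith [abs_sub (f u₂) (f u₁)]

theorem modulusOfContinuityOn_nonneg (hf : ContinuousOn f (Icc a b)) (hab : a ≤ b)
    (hδ : 0 ≤ δ) : 0 ≤ modulusOfContinuityOn f a b δ := by
  simpa using abs_sub_le_modulusOfContinuityOn hf (left_mem_Icc.2 hab) (left_mem_Icc.2 hab)
    (by simpa using hδ)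

end Modulus

theorem floor_div_mul_mem {h : ℝ} (hh : 0 < h) (t : ℝ) : (⌊t / h⌋ : ℝ) * h ∈ Ioc (t - h) t := by
  constructor
  · have := Int.lt_floor_add_one (t / h)
    have : t < ((⌊t / h⌋ : ℝ) + 1) * h := by rwa [div_lt_iff₀ hh] at this
    linarith
  · exact (le_div_iff₀ hh).1 (Int.floor_le _)

theorem floor_div_mul_nonneg {h t : ℝ} (hh : 0 < h) (ht : 0 ≤ t) : 0 ≤ (⌊t / h⌋ : ℝ) * h :=
  mul_nonneg (by exact_mod_cast Int.floor_nonneg.2 (div_nonneg ht hh.le)) hh.le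

theorem gammaPCA_eq (h : ℝ) (r : ℝ → ℝ) (t : ℝ) :
    gammaPCA h r t = ⌊t / h⌋ * h - ⌊r (⌊t / h⌋ * h) / h⌋ * h := by
  rw [gammaPCA, Int.floor_sub_intCast]
  push_cast
  ring

theorem gammaPCA_mem_Icc {h q t : ℝ} {r : ℝ → ℝ} (hh : 0 < h) (ht : 0 ≤ t)
    (hr : r (⌊t / h⌋ * h) ∈ Icc 0 q) :
    gammaPCA h r t ∈ Icc (-q) t := by
  have hu := floor_div_mul_mem hh t
  have hu₀ := floor_div_mul_nonneg hh ht
  have hm := floor_div_mul_mem hh (r (⌊t / h⌋ * h))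
  have hm₀ := floor_div_mul_nonneg hh hr.1
  rw [gammaPCA_eq]
  constructor <;> linarith [hr.2, hm.2, hu.2]

theorem abs_sub_sub_gammaPCA_le {h : ℝ} (hh : 0 < h) (r : ℝ → ℝ) (t : ℝ) :
    |t - r t - gammaPCA h r t| ≤ |r (⌊t / h⌋ * h) - r t| + 2 * h := by
  rw [gammaPCA_eq]
  set u : ℝ := ⌊t / h⌋ * h
  have hu := floor_div_mul_mem hh t
  have hm := floor_div_mul_mem hh (r u)
  rw [abs_le]
  constructor <;>
    linarith [neg_abs_le (r u - r t), le_abs_self (r u - r t), hu.1, hu.2, hm.1, hm.2]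

theorem intCast_mem_Icc_of_mul_mem_Ico {h : ℝ} (hh : 0 < h) {k : ℕ} {j : ℤ}
    (hj : (j : ℝ) * h ∈ Ico (-(k * h)) 0) : j ∈ Icc (-(k : ℤ)) 0 := by
  constructor
  · have : (-(k : ℤ) : ℝ) * h ≤ j * h := by push_cast; linarith [hj.1]
    exact_mod_cast (mul_le_mul_iff_of_pos_right hh).1 this
  · exact_mod_cast (neg_of_mul_neg_left hj.2 hh.le).le

theorem exists_continuous_eqOn_Icc {f : ℝ → ℝ} {a b : ℝ} (hab : a ≤ b)
    (hf : ContinuousOn f (Icc a b)) : ∃ g : ℝ → ℝ, Continuous g ∧ EqOn g f (Icc a b) :=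
  ⟨IccExtend hab ((Icc a b).domRestrict f),
    (continuousOn_iff_continuous_domRestrict.1 hf).Icc_extend', fun _ hx => IccExtend_of_mem _ _ hx⟩

theorem exp_sub_one_le_mul_exp (x : ℝ) : Real.exp x - 1 ≤ x * Real.exp x := by
  have := mul_le_mul_of_nonneg_right (Real.add_one_le_exp (-x)) (Real.exp_pos x).le
  rw [← Real.exp_add, neg_add_cancel, Real.exp_zero] at this
  linarith

theorem exists_first_le_of_continuousOn {f g : ℝ → ℝ} {a t : ℝ}
    (hf : ContinuousOn f (Icc a t)) (hg : ContinuousOn g (Icc a t)) (hat : a ≤ t)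
    (hgt : g t ≤ f t) : ∃ t₀ ∈ Icc a t, g t₀ ≤ f t₀ ∧ ∀ u ∈ Ico a t₀, f u < g u := by
  set S := {u ∈ Icc a t | g u ≤ f u}
  have hS : IsCompact S := isCompact_Icc.of_isClosed_subset
    (isClosed_Icc.isClosed_le hg hf) (sep_subset _ _)
  have hSne : S.Nonempty := ⟨t, right_mem_Icc.2 hat, hgt⟩
  obtain ⟨ht₀, hgf⟩ := hS.sInf_mem hSne
  refine ⟨sInf S, ht₀, hgf, fun u hu => not_le.1 fun hgu => ?_⟩
  exact hu.2.not_ge (csInf_le hS.bddBelow ⟨⟨hu.1, hu.2.le.trans ht₀.2⟩, hgu⟩)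

theorem monotoneOn_integral_of_nonneg {a : ℝ → ℝ} {T : ℝ} (ha : ContinuousOn a (Icc 0 T))
    (ha₀ : ∀ s ∈ Icc 0 T, 0 ≤ a s) : MonotoneOn (fun u => ∫ s in 0..u, a s) (Icc 0 T) :=
  fun _ hu _ hv huv => intervalIntegral.integral_mono_interval le_rfl hu.1 huv
    ((MeasureTheory.ae_restrict_iff' measurableSet_Ioc).2 <| .of_forall
      fun s hs => ha₀ s ⟨hs.1.le, hs.2.trans hv.2⟩)
    ((ha.mono (Icc_subset_Icc le_rfl hv.2)).intervalIntegrable_of_Icc hv.1)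

section DelayedGronwall

variable {E d a : ℝ → ℝ} {T w : ℝ}

theorem abs_lt_of_abs_deriv_right_le_delayed (ha : Continuous a)
    (ha₀ : ∀ s ∈ Icc 0 T, 0 ≤ a s) (hw : 0 ≤ w)
    (hE : ContinuousOn E (Icc 0 T)) (hE₀ : E 0 = 0)
    (hEd : ∀ s ∈ Ico 0 T, HasDerivWithinAt E (d s) (Ici s) s)
    (hd : ∀ s ∈ Ico 0 T, ∀ M, (∀ u ∈ Icc 0 s, |E u| ≤ M) → |d s| ≤ a s * (w + M))
    {δ : ℝ} (hδ : 0 < δ) :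
    ∀ t ∈ Icc 0 T, |E t| < (w + δ) * Real.exp (∫ s in 0..t, a s) - w := by
  intro t ht
  by_contra! hge
  set A : ℝ → ℝ := fun u => ∫ s in 0..u, a s
  set B : ℝ → ℝ := fun u => (w + δ) * Real.exp (A u) - w
  have hB : ∀ u, HasDerivAt B ((w + δ) * (Real.exp (A u) * a u)) u := fun u =>
    (((ha.integral_hasStrictDerivAt 0 u).hasDerivAt.exp).const_mul _).sub_const w
  have hBmono : MonotoneOn B (Icc 0 T) := fun u hu v hv huv => by
    have := Real.exp_le_exp.2 (monotoneOn_integral_of_nonneg ha.continuousOn ha₀ hu hv huv)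
    dsimp only [B]
    gcongr
  have htT : Icc 0 t ⊆ Icc 0 T := Icc_subset_Icc le_rfl ht.2
  obtain ⟨t₀, ht₀, hcross, hbelow⟩ := exists_first_le_of_continuousOn (f := fun u => |E u|)
    (hE.mono htT).abs (fun u _ => (hB u).continuousAt.continuousWithinAt) ht.1 hge
  have ht₀T : Icc 0 t₀ ⊆ Icc 0 T := (Icc_subset_Icc le_rfl ht₀.2).trans htT
  -- the fence `B - δ` starts at `0 = E 0`, and `E` stays below `B` before `t₀`
  have hfence := image_norm_le_of_norm_deriv_right_le_deriv_boundary (B := fun u => B u - δ)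
    (hE.mono ht₀T) (fun s hs => hEd s ⟨hs.1, hs.2.trans_le (ht₀T (right_mem_Icc.2 ht₀.1)).2⟩)
    (by simp [B, A, hE₀]) (fun u => (hB u).sub_const δ) (fun s hs₀ => ?_)
    (right_mem_Icc.2 ht₀.1)
  · simp only [Real.norm_eq_abs] at hfence
    linarith
  have hs : s ∈ Ico 0 T := ⟨hs₀.1, hs₀.2.trans_le (ht₀.2.trans ht.2)⟩
  have hpast : ∀ u ∈ Icc 0 s, |E u| ≤ B s := fun u hu =>
    (hbelow u ⟨hu.1, hu.2.trans_lt hs₀.2⟩).le.trans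
      (hBmono (ht₀T ⟨hu.1, hu.2.trans hs₀.2.le⟩) (Ico_subset_Icc_self hs) hu.2)
  calc ‖d s‖ ≤ a s * (w + B s) := hd s hs _ hpast
    _ = (w + δ) * (Real.exp (A s) * a s) := by ring

theorem abs_le_of_abs_deriv_right_le_delayed (ha : Continuous a)
    (ha₀ : ∀ s ∈ Icc 0 T, 0 ≤ a s) (hw : 0 ≤ w)
    (hE : ContinuousOn E (Icc 0 T)) (hE₀ : E 0 = 0)
    (hEd : ∀ s ∈ Ico 0 T, HasDerivWithinAt E (d s) (Ici s) s)
    (hd : ∀ s ∈ Ico 0 T, ∀ M, (∀ u ∈ Icc 0 s, |E u| ≤ M) → |d s| ≤ a s * (w + M)) :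
    ∀ t ∈ Icc 0 T, |E t| ≤ w * (Real.exp (∫ s in 0..t, a s) - 1) := by
  intro t ht
  refine le_of_forall_pos_lt_add fun ε hε => ?_
  have hexp := Real.exp_pos (∫ s in 0..t, a s)
  refine (abs_lt_of_abs_deriv_right_le_delayed ha ha₀ hw hE hE₀ hEd hd
    (div_pos hε hexp) t ht).trans_eq ?_
  rw [add_mul, div_mul_cancel₀ _ hexp.ne']
  ring

end DelayedGronwall

theorem abs_sub_apply_gammaPCA_le {T q h : ℝ} {k : ℕ} {r φ x z : ℝ → ℝ} (hh : 0 < h)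
    (hk : k * h = q) (hr_cont : ContinuousOn r (Icc 0 T)) (hr : ∀ t ∈ Icc 0 T, r t ∈ Icc 0 q)
    (hx : ContinuousOn x (Icc (-q) T)) (hx_init : ∀ t ∈ Icc (-q) 0, x t = φ t)
    (hz_init : ∀ n : ℤ, -(k : ℤ) ≤ n → n ≤ 0 → z (n * h) = φ (n * h))
    {s M : ℝ} (hs : s ∈ Icc 0 T) (hM : ∀ u ∈ Icc 0 s, |x u - z u| ≤ M) :
    |x (s - r s) - z (gammaPCA h r s)| ≤
      modulusOfContinuityOn x (-q) T (modulusOfContinuityOn r 0 T h + 2 * h) + M := by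
  set u : ℝ := ⌊s / h⌋ * h
  have hu := floor_div_mul_mem hh s
  have huT : u ∈ Icc 0 T := ⟨floor_div_mul_nonneg hh hs.1, hu.2.trans hs.2⟩
  have hγ := gammaPCA_mem_Icc hh hs.1 (hr u huT)
  have hrs := hr s hs
  have hdelay : |x (s - r s) - x (gammaPCA h r s)| ≤
      modulusOfContinuityOn x (-q) T (modulusOfContinuityOn r 0 T h + 2 * h) := by
    refine abs_sub_le_modulusOfContinuityOn hx ⟨hγ.1, hγ.2.trans hs.2⟩
      ⟨by linarith [hrs.2, hs.1], by linarith [hrs.1, hs.2]⟩ ?_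
    calc |s - r s - gammaPCA h r s| ≤ |r u - r s| + 2 * h := abs_sub_sub_gammaPCA_le hh r s
      _ ≤ modulusOfContinuityOn r 0 T h + 2 * h := by
        gcongr
        exact abs_sub_le_modulusOfContinuityOn hr_cont hs huT
          (abs_le.2 ⟨by linarith [hu.1], by linarith [hu.2]⟩)
  have hnode : |x (gammaPCA h r s) - z (gammaPCA h r s)| ≤ M := by
    rcases lt_or_ge (gammaPCA h r s) 0 with hneg | hpos
    · obtain ⟨hj₁, hj₂⟩ := intCast_mem_Icc_of_mul_mem_Ico hh ⟨hk ▸ hγ.1, hneg⟩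
      rw [hx_init _ ⟨hγ.1, hneg.le⟩, gammaPCA, hz_init _ hj₁ hj₂, sub_self, abs_zero]
      exact (abs_nonneg _).trans (hM 0 ⟨le_rfl, hs.1⟩)
    · exact hM _ ⟨hpos, hγ.2⟩
  calc _ ≤ |x (s - r s) - x (gammaPCA h r s)| + |x (gammaPCA h r s) - z (gammaPCA h r s)| :=
        abs_sub_le _ _ _
    _ ≤ _ := add_le_add hdelay hnode

theorem compact_interval_error_estimate_general
    (T q h : ℝ) (hT : 0 < T) (hq : 0 < q) (hh : 0 < h)
    (k : ℕ) (hk : (k : ℝ) * h = q)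
    (a : ℝ → ℝ) (ha_cont : ContinuousOn a (Set.Icc 0 T))
    (ha_nonneg : ∀ t ∈ Set.Icc (0 : ℝ) T, 0 ≤ a t)
    (r : ℝ → ℝ) (hr_cont : ContinuousOn r (Set.Icc 0 T))
    (hr : ∀ t ∈ Set.Icc (0 : ℝ) T, r t ∈ Set.Icc 0 q)
    (φ : ℝ → ℝ)
    (x : ℝ → ℝ)
    (hx_cont : ContinuousOn x (Set.Icc (-q) T))
    (hx_init : ∀ t ∈ Set.Icc (-q) (0 : ℝ), x t = φ t)
    (hx_deriv : ∀ t ∈ Set.Icc (0 : ℝ) T,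
      HasDerivWithinAt x (-(a t) * x (t - r t)) (Set.Ici t) t)
    (z : ℝ → ℝ)
    (hz_cont : ContinuousOn z (Set.Ici 0))
    (hz_init : ∀ n : ℤ, -(k : ℤ) ≤ n → n ≤ 0 → z ((n : ℝ) * h) = φ ((n : ℝ) * h))
    (hz_deriv : ∀ t ∈ Set.Ico (0 : ℝ) T,
      HasDerivWithinAt z (-(a t) * z (gammaPCA h r t)) (Set.Ici t) t) :
    ∀ t ∈ Set.Icc (0 : ℝ) T,
      |x t - z t| ≤
        (Real.exp (∫ s in (0:ℝ)..T, a s) * ∫ s in (0:ℝ)..T, a s) *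
          sSup {d : ℝ | ∃ t₁ t₂ : ℝ, -q ≤ t₁ ∧ t₁ ≤ T ∧ -q ≤ t₂ ∧ t₂ ≤ T ∧
            |t₂ - t₁| ≤
              (sSup {e : ℝ | ∃ s₁ s₂ : ℝ, 0 ≤ s₁ ∧ s₁ ≤ T ∧ 0 ≤ s₂ ∧ s₂ ≤ T ∧
                |s₂ - s₁| ≤ h ∧ e = |r s₂ - r s₁|}) + 2 * h ∧
            d = |x t₂ - x t₁|} := by
  intro t ht
  set wx := modulusOfContinuityOn x (-q) T (modulusOfContinuityOn r 0 T h + 2 * h)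
  change |x t - z t| ≤ _ * wx
  have hwx : 0 ≤ wx := modulusOfContinuityOn_nonneg hx_cont (by linarith)
    (by linarith [modulusOfContinuityOn_nonneg hr_cont hT.le hh.le])
  -- a continuous extension of `a`, so that `u ↦ ∫ s in 0..u, a' s` is differentiable everywhere
  obtain ⟨a', ha', ha'_eq⟩ := exists_continuous_eqOn_Icc hT.le ha_cont
  have ha'₀ : ∀ s ∈ Icc 0 T, 0 ≤ a' s := fun s hs => ha'_eq hs ▸ ha_nonneg s hs
  have herr := abs_le_of_abs_deriv_right_le_delayed (E := fun u => x u - z u) ha' ha'₀ hwx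
    ((hx_cont.mono (Icc_subset_Icc (by linarith) le_rfl)).sub (hz_cont.mono fun u hu => hu.1))
    (by simp [hx_init 0 ⟨by linarith, le_rfl⟩, by simpa using hz_init 0 (by simp) le_rfl])
    (fun s hs => (hx_deriv s (Ico_subset_Icc_self hs)).sub (hz_deriv s hs))
    (fun s hs M hM => by
      have hs' := Ico_subset_Icc_self hs
      rw [← mul_sub, abs_mul, abs_neg, abs_of_nonneg (ha_nonneg s hs'), ha'_eq hs']
      exact mul_le_mul_of_nonneg_left (abs_sub_apply_gammaPCA_le hh hk hr_cont hr hx_cont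
        hx_init hz_init hs' hM) (ha_nonneg s hs')) t ht
  have hAt := monotoneOn_integral_of_nonneg ha'.continuousOn ha'₀ ht ⟨hT.le, le_rfl⟩ ht.2
  have hAT : ∫ s in 0..T, a' s = ∫ s in 0..T, a s :=
    intervalIntegral.integral_congr (by rwa [uIcc_of_le hT.le])
  calc |x t - z t| ≤ wx * (Real.exp (∫ s in 0..t, a' s) - 1) := herr
    _ ≤ wx * (Real.exp (∫ s in 0..T, a' s) - 1) := by gcongr
    _ ≤ wx * ((∫ s in 0..T, a' s) * Real.exp (∫ s in 0..T, a' s)) := by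
        gcongr; exact exp_sub_one_le_mul_exp _
    _ = _ := by rw [hAT]; ring

/-- Error estimate over a compact interval [0,T] (Theorem 3.2). -/
theorem compact_interval_error_estimate
    (T q h : ℝ) (hT : 0 < T) (hq : 0 < q) (hh : 0 < h) (hhq : h ≤ q)
    (k : ℕ) (hk : (k : ℝ) * h = q)
    (a : ℝ → ℝ) (ha_cont : ContinuousOn a (Set.Icc 0 T))
    (ha_nonneg : ∀ t ∈ Set.Icc (0 : ℝ) T, 0 ≤ a t)
    (r : ℝ → ℝ) (hr_cont : ContinuousOn r (Set.Icc 0 T))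
    (hr : ∀ t ∈ Set.Icc (0 : ℝ) T, r t ∈ Set.Icc 0 q)
    (φ : ℝ → ℝ) (hφ : ContinuousOn φ (Set.Icc (-q) 0))
    (x : ℝ → ℝ)
    (hx_cont : ContinuousOn x (Set.Icc (-q) T))
    (hx_init : ∀ t ∈ Set.Icc (-q) (0 : ℝ), x t = φ t)
    (hx_deriv : ∀ t ∈ Set.Icc (0 : ℝ) T,
      HasDerivWithinAt x (-(a t) * x (t - r t)) (Set.Ici t) t)
    (z : ℝ → ℝ)
    (hz_cont : ContinuousOn z (Set.Ici 0))
    (hz_init : ∀ n : ℤ, -(k : ℤ) ≤ n → n ≤ 0 → z ((n : ℝ) * h) = φ ((n : ℝ) * h))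
    (hz_deriv : ∀ t ∈ Set.Ico (0 : ℝ) T,
      HasDerivWithinAt z (-(a t) * z (gammaPCA h r t)) (Set.Ici t) t) :
    ∀ t ∈ Set.Icc (0 : ℝ) T,
      |x t - z t| ≤
        (Real.exp (∫ s in (0:ℝ)..T, a s) * ∫ s in (0:ℝ)..T, a s) *
          sSup {d : ℝ | ∃ t₁ t₂ : ℝ, -q ≤ t₁ ∧ t₁ ≤ T ∧ -q ≤ t₂ ∧ t₂ ≤ T ∧
            |t₂ - t₁| ≤
              (sSup {e : ℝ | ∃ s₁ s₂ : ℝ, 0 ≤ s₁ ∧ s₁ ≤ T ∧ 0 ≤ s₂ ∧ s₂ ≤ T ∧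
                |s₂ - s₁| ≤ h ∧ e = |r s₂ - r s₁|}) + 2 * h ∧
            d = |x t₂ - x t₁|} :=
  compact_interval_error_estimate_general T q h hT hq hh k hk a ha_cont ha_nonneg r hr_cont hr φ x
    hx_cont hx_init hx_deriv z hz_cont hz_init hz_deriv
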